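/- arXiv:2010.15742 — 2 statements merged into one kernel-verified Lean document; each statement's English description precedes it below -/
import Mathlib

section
/- Let (M1, g1) and (M2, g2) be closed Riemannian manifolds of dimensions n and m respectively, such that at points p ∈ M1 and q ∈ M2 the k1-th intermediate Ricci curvature of M1 is positive and the k2-th intermediate Ricci curvature of M2 is positive. Then at the point (p,q) the Riemannian product (M1 × M2, g1 ⊕ g2) has positive k-th intermediate Ricci curvature for k = max{n + k2, m + k1}. -/
/-
Write the unit vector of a frame of the product as `v = (v₁, v₂)` and the others as
`wᵢ = (aᵢ, bᵢ)`. The Ricci sum splits as `∑ R₁(v₁, aᵢ, aᵢ, v₁) + ∑ R₂(v₂, bᵢ, bᵢ, v₂)`; the first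
part vanishes if `v₁ = 0` and we show it is positive otherwise (symmetrically for the second).
With `u = v₁ / ‖v₁‖`, it is `‖v₁‖²` times the trace of the Jacobi form `R₁(u, ·, ·, u)` on `u⊥`
against the projections `yᵢ` of the `aᵢ`. The `yᵢ` form a Bessel family, `∑ ⟪yᵢ, x⟫² ≤ ‖x‖²`, of
total weight `∑ ‖yᵢ‖² ≥ k - m ≥ k₁`, since the `V₂`-components of an orthonormal frame have total
weight at most `m`. In an eigenbasis of the Jacobi form, such a trace is at least the sum of the
`k₁` smallest eigenvalues, which is positive by the hypothesis on `M₁`.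
-/

open scoped RealInnerProductSpace

/-- A (curvature-like) quadrilinear form `R` on an inner product space has positive
`k`-th intermediate Ricci curvature at the given point if for every orthonormal
`(k+1)`-frame `{v, w₁, …, w_k}` one has `∑ᵢ sec(v, wᵢ) = ∑ᵢ R(v, wᵢ, wᵢ, v) > 0`. -/
def RicciPos {V : Type*} [NormedAddCommGroup V] [InnerProductSpace ℝ V]
    (R : V →ₗ[ℝ] V →ₗ[ℝ] V →ₗ[ℝ] V →ₗ[ℝ] ℝ) (k : ℕ) : Prop :=
  ∀ (v : V) (w : Fin k → V), Orthonormal ℝ (Fin.cons v w) → 0 < ∑ i, R v (w i) (w i) v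

open Finset

section Bessel

variable {ι U : Type*} [Fintype ι] [NormedAddCommGroup U] [InnerProductSpace ℝ U]

def IsBesselFamily (b : ι → U) : Prop :=
  ∀ x, ∑ i, ⟪b i, x⟫ ^ 2 ≤ ‖x‖ ^ 2

theorem Orthonormal.isBesselFamily {b : ι → U} (hb : Orthonormal ℝ b) : IsBesselFamily b :=
  fun x => by simpa [Real.norm_eq_abs, sq_abs] using hb.sum_inner_products_le (s := univ) (x := x)

theorem IsBesselFamily.of_inner_eq {U' : Type*} [NormedAddCommGroup U'] [InnerProductSpace ℝ U']
    {b : ι → U} (hb : IsBesselFamily b) {c : ι → U'} (L : U' → U) (hL : ∀ x, ‖L x‖ = ‖x‖)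
    (hc : ∀ i x, ⟪c i, x⟫ = ⟪b i, L x⟫) : IsBesselFamily c :=
  fun x => by simpa only [hc, hL] using hb (L x)

theorem IsBesselFamily.inner_sq_le_one {b : ι → U} (hb : IsBesselFamily b) {x : U}
    (hx : ‖x‖ = 1) : ∑ i, ⟪b i, x⟫ ^ 2 ≤ 1 := by
  simpa [hx] using hb x

theorem IsBesselFamily.sum_norm_sq_le_finrank [FiniteDimensional ℝ U] {b : ι → U}
    (hb : IsBesselFamily b) : ∑ i, ‖b i‖ ^ 2 ≤ Module.finrank ℝ U := by
  let e := stdOrthonormalBasis ℝ U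
  calc ∑ i, ‖b i‖ ^ 2 = ∑ j, ∑ i, ⟪b i, e j⟫ ^ 2 := by
        rw [sum_comm]; simp_rw [e.sum_sq_inner_left]
    _ ≤ ∑ _j, (1 : ℝ) := sum_le_sum fun j _ => hb.inner_sq_le_one (e.orthonormal.1 j)
    _ = Module.finrank ℝ U := by simp

theorem isBesselFamily_cons_iff {n : ℕ} {v : U} {a : Fin n → U} :
    IsBesselFamily (Fin.cons v a : Fin (n + 1) → U) ↔
      ∀ x, ⟪v, x⟫ ^ 2 + ∑ i, ⟪a i, x⟫ ^ 2 ≤ ‖x‖ ^ 2 := by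
  simp [IsBesselFamily, Fin.sum_univ_succ]

end Bessel

theorem sum_le_sum_mul_of_threshold {ι : Type*} [Fintype ι] (A : Finset ι) {μ p : ι → ℝ} {t : ℝ}
    (ht : 0 ≤ t) (hA : ∀ j ∈ A, μ j ≤ t) (hAc : ∀ j ∉ A, t ≤ μ j) (hp₀ : ∀ j, 0 ≤ p j)
    (hp₁ : ∀ j, p j ≤ 1) (hcard : (#A : ℝ) ≤ ∑ j, p j) :
    ∑ j ∈ A, μ j ≤ ∑ j, μ j * p j := by
  classical
  have key : ∀ j, t * (p j - if j ∈ A then 1 else 0) ≤ μ j * p j - if j ∈ A then μ j else 0 := by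
    intro j
    split_ifs with hj
    · nlinarith [hA j hj, hp₁ j]
    · nlinarith [hAc j hj, hp₀ j]
  have hsum := sum_le_sum fun j (_ : j ∈ univ) => key j
  simp only [← mul_sum, sum_sub_distrib, sum_ite_mem, univ_inter, sum_const, nsmul_one] at hsum
  nlinarith [mul_nonneg ht (sub_nonneg.2 hcard)]

theorem sum_mul_pos_of_antitone {d k : ℕ} (hkd : k ≤ d) {μ p : Fin d → ℝ} (hμ : Antitone μ)
    (hp₀ : ∀ j, 0 ≤ p j) (hp₁ : ∀ j, p j ≤ 1) (htr : k ≤ ∑ j, p j)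
    (hσ : 0 < ∑ i, μ (Fin.natAdd_castLEEmb hkd i)) :
    0 < ∑ j, μ j * p j := by
  set A := univ.map (Fin.natAdd_castLEEmb hkd)
  have hA : ∀ j, j ∈ A ↔ d - k ≤ (j : ℕ) := fun j => by
    rw [← Set.mem_ofPred_eq (p := fun j : Fin d => d - k ≤ (j : ℕ)),
      ← Fin.range_natAdd_castLEEmb hkd]
    simp [A]
  rw [← sum_map] at hσ
  have hk : 0 < k := Nat.pos_of_ne_zero <| by rintro rfl; simp at hσ
  -- `μ` is antitone, so its `k` smallest values sit at the end, below the threshold `t`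
  set t := μ ⟨d - k, by omega⟩
  have hAt : ∀ j ∈ A, μ j ≤ t := fun j hj => hμ (Fin.mk_le_of_le_val ((hA j).1 hj))
  have hAct : ∀ j ∉ A, t ≤ μ j := fun j hj => hμ (Fin.le_def.2 (not_le.1 ((hA j).not.1 hj)).le)
  have hcard : #A = k := by simp [A]
  have ht : 0 ≤ t := by
    have := sum_le_sum hAt
    rw [sum_const, hcard, nsmul_eq_mul] at this
    nlinarith
  exact hσ.trans_le (sum_le_sum_mul_of_threshold A ht hAt hAct hp₀ hp₁ (hcard ▸ htr))

section KyFan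

variable {U : Type*} [NormedAddCommGroup U] [InnerProductSpace ℝ U] [FiniteDimensional ℝ U]

theorem LinearMap.IsSymmetric.inner_map_self_eq_sum {T : U →ₗ[ℝ] U} (hT : T.IsSymmetric) {n : ℕ}
    (hn : Module.finrank ℝ U = n) (x : U) :
    ⟪T x, x⟫ = ∑ j, hT.eigenvalues hn j * ⟪hT.eigenvectorBasis hn j, x⟫ ^ 2 := by
  rw [← (hT.eigenvectorBasis hn).sum_inner_mul_inner (T x) x]
  refine sum_congr rfl fun j _ => ?_
  rw [hT, hT.apply_eigenvectorBasis, real_inner_smul_right, real_inner_comm x]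
  simp only [RCLike.ofReal_real_eq_id, id_eq]
  ring

theorem exists_inner_map_eq (B : U →ₗ[ℝ] U →ₗ[ℝ] ℝ) : ∃ T : U →ₗ[ℝ] U, ∀ x y, ⟪T x, y⟫ = B x y :=
  ⟨{ toFun x := (InnerProductSpace.toDual ℝ U).symm (B x).toContinuousLinearMap
     map_add' x y := by simp
     map_smul' c x := by simp },
    fun x y => by simp [InnerProductSpace.toDual_symm_apply]⟩

theorem IsBesselFamily.sum_pos {k : ℕ} {B : U →ₗ[ℝ] U →ₗ[ℝ] ℝ} (hB : ∀ x y, B x y = B y x)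
    (hpos : ∀ w : Fin k → U, Orthonormal ℝ w → 0 < ∑ i, B (w i) (w i))
    {ι : Type*} [Fintype ι] {b : ι → U} (hb : IsBesselFamily b) (htr : k ≤ ∑ i, ‖b i‖ ^ 2) :
    0 < ∑ i, B (b i) (b i) := by
  obtain ⟨T, hTB⟩ := exists_inner_map_eq B
  have hT : T.IsSymmetric := fun x y => by rw [hTB, real_inner_comm, hTB, hB]
  obtain ⟨d, hd⟩ : ∃ d, Module.finrank ℝ U = d := ⟨_, rfl⟩
  set e := hT.eigenvectorBasis hd
  set μ := hT.eigenvalues hd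
  set p : Fin d → ℝ := fun j => ∑ i, ⟪e j, b i⟫ ^ 2
  have hp₀ : ∀ j, 0 ≤ p j := fun j => sum_nonneg fun i _ => sq_nonneg _
  have hp₁ : ∀ j, p j ≤ 1 := fun j => by
    simpa only [p, real_inner_comm] using hb.inner_sq_le_one (e.orthonormal.1 j)
  have hsum_p : ∑ j, p j = ∑ i, ‖b i‖ ^ 2 := by
    simp only [p]; rw [sum_comm]; simp_rw [e.sum_sq_inner_right]
  have hBμ : ∑ i, B (b i) (b i) = ∑ j, μ j * p j := by
    simp_rw [← hTB, hT.inner_map_self_eq_sum hd, p, mul_sum]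
    exact sum_comm
  have hkd : k ≤ d := by exact_mod_cast htr.trans (hd ▸ hb.sum_norm_sq_le_finrank)
  have hσ : 0 < ∑ i, μ (Fin.natAdd_castLEEmb hkd i) := by
    convert hpos _ (e.orthonormal.comp _ (Fin.natAdd_castLEEmb hkd).injective) using 2 with i
    simp [← hTB, real_inner_smul_left, e.orthonormal.1, μ, e]
  rw [hBμ]
  exact sum_mul_pos_of_antitone hkd (hT.eigenvalues_antitone hd) hp₀ hp₁ (hsum_p ▸ htr) hσ

end KyFan

section Curvature

variable {V : Type*} [NormedAddCommGroup V] [InnerProductSpace ℝ V]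

theorem Orthonormal.cons {k : ℕ} {u : V} {w : Fin k → V} (hu : ‖u‖ = 1)
    (huw : ∀ j, ⟪u, w j⟫ = 0) (hw : Orthonormal ℝ w) :
    Orthonormal ℝ (Fin.cons u w : Fin (k + 1) → V) := by
  refine orthonormal_iff_ite.2 fun i j => ?_
  induction i using Fin.cases <;> induction j using Fin.cases <;>
    simp [hu, huw, real_inner_comm u, orthonormal_iff_ite.1 hw, Fin.succ_inj,
      (Fin.succ_ne_zero _).symm]

def jacobiForm (R : V →ₗ[ℝ] V →ₗ[ℝ] V →ₗ[ℝ] V →ₗ[ℝ] ℝ) (u : V) : V →ₗ[ℝ] V →ₗ[ℝ] ℝ :=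
  (R u).compr₂ (LinearMap.applyₗ u)

@[simp]
theorem jacobiForm_apply (R : V →ₗ[ℝ] V →ₗ[ℝ] V →ₗ[ℝ] V →ₗ[ℝ] ℝ) (u x y : V) :
    jacobiForm R u x y = R u x y u :=
  rfl

variable {R : V →ₗ[ℝ] V →ₗ[ℝ] V →ₗ[ℝ] V →ₗ[ℝ] ℝ}

theorem jacobiForm_comm (hsym : ∀ x y z t, R x y z t = R z t x y)
    (hskew : ∀ x y z t, R x y z t = - R y x z t) (u x y : V) :
    jacobiForm R u x y = jacobiForm R u y x := by
  simp only [jacobiForm_apply]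
  linarith [hsym u x y u, hskew y u u x, hsym u y u x, hskew u x u y, hsym x u u y]

theorem jacobiForm_add_smul_self (hsym : ∀ x y z t, R x y z t = R z t x y)
    (hskew : ∀ x y z t, R x y z t = - R y x z t) (u x : V) (c : ℝ) :
    jacobiForm R u (x + c • u) (x + c • u) = jacobiForm R u x x := by
  have huu : ∀ z t, R u u z t = 0 := fun z t => by linarith [hskew u u z t]
  simp [huu, hsym u x u u]

theorem RicciPos.jacobiForm_pos {k : ℕ} (h : RicciPos R k) {u : V} (hu : ‖u‖ = 1)
    (w : Fin k → (ℝ ∙ u)ᗮ) (hw : Orthonormal ℝ w) :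
    0 < ∑ i, jacobiForm R u (w i) (w i) :=
  h u _ (.cons hu (fun j => Submodule.mem_orthogonal_singleton_iff_inner_right.1 (w j).2)
    (hw.comp_linearIsometry (ℝ ∙ u)ᗮ.subtypeₗᵢ))

theorem RicciPos.sum_pos_of_unit (hsym : ∀ x y z t, R x y z t = R z t x y)
    (hskew : ∀ x y z t, R x y z t = - R y x z t) [FiniteDimensional ℝ V] {k N : ℕ}
    (h : RicciPos R k) {u : V} (hu : ‖u‖ = 1) {a : Fin N → V}
    (ha : ∀ x, ⟪u, x⟫ = 0 → ∑ i, ⟪a i, x⟫ ^ 2 ≤ ‖x‖ ^ 2)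
    (htr : k ≤ ∑ i, ‖a i‖ ^ 2 - ∑ i, ⟪u, a i⟫ ^ 2) :
    0 < ∑ i, R u (a i) (a i) u := by
  set K := (ℝ ∙ u)ᗮ
  have hK : ∀ x : K, ⟪u, x⟫ = 0 := fun x =>
    Submodule.mem_orthogonal_singleton_iff_inner_right.1 x.2
  have hy : ∀ i, a i - ⟪u, a i⟫ • u ∈ K := fun i => by
    simp [K, Submodule.mem_orthogonal_singleton_iff_inner_right, inner_sub_right,
      real_inner_smul_right, hu]
  set y : Fin N → K := fun i => ⟨a i - ⟪u, a i⟫ • u, hy i⟩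
  have hyb : IsBesselFamily y := fun x => by
    simpa [y, inner_sub_left, real_inner_smul_left, hK x] using ha x (hK x)
  have hy_norm : ∀ i, ‖y i‖ ^ 2 = ‖a i‖ ^ 2 - ⟪u, a i⟫ ^ 2 := fun i => by
    rw [← Submodule.norm_coe, norm_sub_sq_real, real_inner_smul_right, norm_smul, hu, mul_one,
      Real.norm_eq_abs, sq_abs, real_inner_comm]
    ring
  have hpos := hyb.sum_pos (B := (jacobiForm R u).compl₁₂ K.subtype K.subtype)
    (fun x y => jacobiForm_comm hsym hskew u x y) (h.jacobiForm_pos hu)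
    (by simpa only [hy_norm, sum_sub_distrib] using htr)
  have hRy : ∀ i, R u (a i) (a i) u = jacobiForm R u (y i) (y i) := fun i => by
    rw [show (y i : V) = a i + (-⟪u, a i⟫) • u by simp [y, sub_eq_add_neg],
      jacobiForm_add_smul_self hsym hskew, jacobiForm_apply]
  simp only [hRy]
  exact hpos

theorem RicciPos.sum_pos_of_cons (hsym : ∀ x y z t, R x y z t = R z t x y)
    (hskew : ∀ x y z t, R x y z t = - R y x z t) [FiniteDimensional ℝ V] {k N : ℕ}
    (h : RicciPos R k) {v : V} (hv : v ≠ 0) {a : Fin N → V}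
    (hb : IsBesselFamily (Fin.cons v a : Fin (N + 1) → V))
    (htr : k + 1 ≤ ∑ j, ‖(Fin.cons v a : Fin (N + 1) → V) j‖ ^ 2) :
    0 < ∑ i, R v (a i) (a i) v := by
  rw [isBesselFamily_cons_iff] at hb
  simp only [Fin.sum_univ_succ, Fin.cons_zero, Fin.cons_succ] at htr
  set u := ‖v‖⁻¹ • v
  have hu : ‖u‖ = 1 := norm_smul_inv_norm hv
  have hvu : v = ‖v‖ • u := by simp [u, smul_smul, hv]
  have hinner : ∀ x, ⟪v, x⟫ = ‖v‖ * ⟪u, x⟫ := fun x => by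
    conv_lhs => rw [hvu]
    exact real_inner_smul_left _ _ _
  have ha : ∀ x, ⟪u, x⟫ = 0 → ∑ i, ⟪a i, x⟫ ^ 2 ≤ ‖x‖ ^ 2 := fun x hx => by
    simpa [hinner, hx] using hb x
  have htr' : k ≤ ∑ i, ‖a i‖ ^ 2 - ∑ i, ⟪u, a i⟫ ^ 2 := by
    have := hb u
    simp only [hinner, real_inner_self_eq_norm_sq, hu, real_inner_comm u] at this
    nlinarith
  have hRv : ∀ i, R v (a i) (a i) v = ‖v‖ ^ 2 * R u (a i) (a i) u := fun i => by
    conv_lhs => rw [hvu]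
    simp only [map_smul, LinearMap.smul_apply, smul_eq_mul]
    ring
  simp only [hRv, ← mul_sum]
  exact mul_pos (by positivity) (h.sum_pos_of_unit hsym hskew hu ha htr')

end Curvature

section Product

variable {V₁ V₂ : Type*} [NormedAddCommGroup V₁] [InnerProductSpace ℝ V₁]
  [NormedAddCommGroup V₂] [InnerProductSpace ℝ V₂]

theorem IsBesselFamily.fst {ι : Type*} [Fintype ι] {f : ι → WithLp 2 (V₁ × V₂)}
    (hf : IsBesselFamily f) : IsBesselFamily (WithLp.fst ∘ f) :=
  hf.of_inner_eq (fun x => WithLp.toLp 2 (x, 0))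
    (fun x => by simp)
    (fun i x => by simp)

theorem IsBesselFamily.snd {ι : Type*} [Fintype ι] {f : ι → WithLp 2 (V₁ × V₂)}
    (hf : IsBesselFamily f) : IsBesselFamily (WithLp.snd ∘ f) :=
  hf.of_inner_eq (fun x => WithLp.toLp 2 (0, x))
    (fun x => by simp)
    (fun i x => by simp)

theorem RicciPos.prod [FiniteDimensional ℝ V₁] [FiniteDimensional ℝ V₂]
    {R₁ : V₁ →ₗ[ℝ] V₁ →ₗ[ℝ] V₁ →ₗ[ℝ] V₁ →ₗ[ℝ] ℝ} {R₂ : V₂ →ₗ[ℝ] V₂ →ₗ[ℝ] V₂ →ₗ[ℝ] V₂ →ₗ[ℝ] ℝ}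
    (hsym₁ : ∀ x y z t, R₁ x y z t = R₁ z t x y) (hskew₁ : ∀ x y z t, R₁ x y z t = - R₁ y x z t)
    (hsym₂ : ∀ x y z t, R₂ x y z t = R₂ z t x y) (hskew₂ : ∀ x y z t, R₂ x y z t = - R₂ y x z t)
    {k₁ k₂ k : ℕ} (h₁ : RicciPos R₁ k₁) (h₂ : RicciPos R₂ k₂)
    (hk₁ : Module.finrank ℝ V₂ + k₁ ≤ k) (hk₂ : Module.finrank ℝ V₁ + k₂ ≤ k)
    {R : WithLp 2 (V₁ × V₂) →ₗ[ℝ] WithLp 2 (V₁ × V₂) →ₗ[ℝ] WithLp 2 (V₁ × V₂) →ₗ[ℝ]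
      WithLp 2 (V₁ × V₂) →ₗ[ℝ] ℝ}
    (hR : ∀ x y z t, R x y z t = R₁ x.fst y.fst z.fst t.fst + R₂ x.snd y.snd z.snd t.snd) :
    RicciPos R k := by
  intro v w hon
  have hb₁ := hon.isBesselFamily.fst
  have hb₂ := hon.isBesselFamily.snd
  have hnorm : ∑ j, ‖(WithLp.fst ∘ Fin.cons v w) j‖ ^ 2 + ∑ j, ‖(WithLp.snd ∘ Fin.cons v w) j‖ ^ 2
      = k + 1 := by
    simp [← sum_add_distrib, ← WithLp.prod_norm_sq_eq_of_L2, hon.1]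
  have htr₁ := hb₁.sum_norm_sq_le_finrank
  have htr₂ := hb₂.sum_norm_sq_le_finrank
  have hk₁' : (Module.finrank ℝ V₂ + k₁ : ℝ) ≤ k := by exact_mod_cast hk₁
  have hk₂' : (Module.finrank ℝ V₁ + k₂ : ℝ) ≤ k := by exact_mod_cast hk₂
  simp only [Fin.comp_cons] at hb₁ hb₂ hnorm htr₁ htr₂
  have hpos₁ : v.fst ≠ 0 → 0 < ∑ i, R₁ v.fst (w i).fst (w i).fst v.fst := fun hv =>
    h₁.sum_pos_of_cons hsym₁ hskew₁ hv (a := WithLp.fst ∘ w) hb₁ (by linarith)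
  have hpos₂ : v.snd ≠ 0 → 0 < ∑ i, R₂ v.snd (w i).snd (w i).snd v.snd := fun hv =>
    h₂.sum_pos_of_cons hsym₂ hskew₂ hv (a := WithLp.snd ∘ w) hb₂ (by linarith)
  simp only [hR, sum_add_distrib]
  rcases eq_or_ne v.fst 0 with hv₁ | hv₁
  · have hv₂ : v.snd ≠ 0 := by
      rintro hv₂
      have hv : ‖v‖ = 1 := by simpa using hon.1 0
      simpa [hv, hv₁, hv₂] using WithLp.prod_norm_sq_eq_of_L2 v
    simpa [hv₁] using hpos₂ hv₂
  rcases eq_or_ne v.snd 0 with hv₂ | hv₂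
  · simpa [hv₂] using hpos₁ hv₁
  exact add_pos (hpos₁ hv₁) (hpos₂ hv₂)

end Product

theorem stmt_0_general {V₁ V₂ : Type*}
    [NormedAddCommGroup V₁] [InnerProductSpace ℝ V₁] [FiniteDimensional ℝ V₁]
    [NormedAddCommGroup V₂] [InnerProductSpace ℝ V₂] [FiniteDimensional ℝ V₂]
    (n m k₁ k₂ : ℕ) (hn : Module.finrank ℝ V₁ = n) (hm : Module.finrank ℝ V₂ = m)
    (R₁ : V₁ →ₗ[ℝ] V₁ →ₗ[ℝ] V₁ →ₗ[ℝ] V₁ →ₗ[ℝ] ℝ)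
    (R₂ : V₂ →ₗ[ℝ] V₂ →ₗ[ℝ] V₂ →ₗ[ℝ] V₂ →ₗ[ℝ] ℝ)
    (hsym₁ : ∀ x y z t, R₁ x y z t = R₁ z t x y) (hskew₁ : ∀ x y z t, R₁ x y z t = - R₁ y x z t)
    (hsym₂ : ∀ x y z t, R₂ x y z t = R₂ z t x y) (hskew₂ : ∀ x y z t, R₂ x y z t = - R₂ y x z t)
    (h₁ : RicciPos R₁ k₁) (h₂ : RicciPos R₂ k₂)
    (R : WithLp 2 (V₁ × V₂) →ₗ[ℝ] WithLp 2 (V₁ × V₂) →ₗ[ℝ] WithLp 2 (V₁ × V₂) →ₗ[ℝ]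
      WithLp 2 (V₁ × V₂) →ₗ[ℝ] ℝ)
    (hR : ∀ x y z t : WithLp 2 (V₁ × V₂),
      R x y z t =
        R₁ (WithLp.equiv 2 (V₁ × V₂) x).1 (WithLp.equiv 2 (V₁ × V₂) y).1
          (WithLp.equiv 2 (V₁ × V₂) z).1 (WithLp.equiv 2 (V₁ × V₂) t).1 +
        R₂ (WithLp.equiv 2 (V₁ × V₂) x).2 (WithLp.equiv 2 (V₁ × V₂) y).2
          (WithLp.equiv 2 (V₁ × V₂) z).2 (WithLp.equiv 2 (V₁ × V₂) t).2) :
    RicciPos R (max (n + k₂) (m + k₁)) := by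
  subst hn hm
  exact RicciPos.prod hsym₁ hskew₁ hsym₂ hskew₂ h₁ h₂ (le_max_right _ _) (le_max_left _ _) hR

/-- Let `(M₁, g₁)` and `(M₂, g₂)` be closed Riemannian manifolds of dimensions `n` and
`m`, with tangent spaces `V₁` at `p ∈ M₁` and `V₂` at `q ∈ M₂` and curvature tensors
`R₁`, `R₂` there (satisfying the usual symmetries).  If at `p` the `k₁`-th intermediate
Ricci curvature of `M₁` is positive and at `q` the `k₂`-th intermediate Ricci curvature
of `M₂` is positive, then at `(p, q)` the Riemannian product `(M₁ × M₂, g₁ ⊕ g₂)`,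
whose tangent space is the orthogonal direct sum `V₁ ⊕ V₂` and whose curvature tensor is
`R((x₁,x₂),(y₁,y₂),(z₁,z₂),(t₁,t₂)) = R₁(x₁,y₁,z₁,t₁) + R₂(x₂,y₂,z₂,t₂)`, has positive
`k`-th intermediate Ricci curvature for `k = max {n + k₂, m + k₁}`. -/
theorem stmt_0 {V₁ V₂ : Type*}
    [NormedAddCommGroup V₁] [InnerProductSpace ℝ V₁] [FiniteDimensional ℝ V₁]
    [NormedAddCommGroup V₂] [InnerProductSpace ℝ V₂] [FiniteDimensional ℝ V₂]
    (n m k₁ k₂ : ℕ) (hn : Module.finrank ℝ V₁ = n) (hm : Module.finrank ℝ V₂ = m)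
    (R₁ : V₁ →ₗ[ℝ] V₁ →ₗ[ℝ] V₁ →ₗ[ℝ] V₁ →ₗ[ℝ] ℝ)
    (R₂ : V₂ →ₗ[ℝ] V₂ →ₗ[ℝ] V₂ →ₗ[ℝ] V₂ →ₗ[ℝ] ℝ)
    (hsym₁ : ∀ x y z t, R₁ x y z t = R₁ z t x y) (hskew₁ : ∀ x y z t, R₁ x y z t = - R₁ y x z t)
    (hbianchi₁ : ∀ x y z t, R₁ x y z t + R₁ y z x t + R₁ z x y t = 0)
    (hsym₂ : ∀ x y z t, R₂ x y z t = R₂ z t x y) (hskew₂ : ∀ x y z t, R₂ x y z t = - R₂ y x z t)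
    (hbianchi₂ : ∀ x y z t, R₂ x y z t + R₂ y z x t + R₂ z x y t = 0)
    (h₁ : RicciPos R₁ k₁) (h₂ : RicciPos R₂ k₂)
    (R : WithLp 2 (V₁ × V₂) →ₗ[ℝ] WithLp 2 (V₁ × V₂) →ₗ[ℝ] WithLp 2 (V₁ × V₂) →ₗ[ℝ]
      WithLp 2 (V₁ × V₂) →ₗ[ℝ] ℝ)
    (hR : ∀ x y z t : WithLp 2 (V₁ × V₂),
      R x y z t =
        R₁ (WithLp.equiv 2 (V₁ × V₂) x).1 (WithLp.equiv 2 (V₁ × V₂) y).1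
          (WithLp.equiv 2 (V₁ × V₂) z).1 (WithLp.equiv 2 (V₁ × V₂) t).1 +
        R₂ (WithLp.equiv 2 (V₁ × V₂) x).2 (WithLp.equiv 2 (V₁ × V₂) y).2
          (WithLp.equiv 2 (V₁ × V₂) z).2 (WithLp.equiv 2 (V₁ × V₂) t).2) :
    RicciPos R (max (n + k₂) (m + k₁)) :=
  stmt_0_general n m k₁ k₂ hn hm R₁ R₂ hsym₁ hskew₁ hsym₂ hskew₂ h₁ h₂ R hR
end

section
/- Let P be a compact symmetric space whose sectional curvature of the 2-plane spanned by perpendicular unit vectors v, w ∈ 𝔭 is given by sec(v,w) = ‖[v,w]‖². Then for any positive integer k, P has positive k-th intermediate Ricci curvature if and only if k ≥ k_P, where k_P = max_{ξ ∈ 𝔭 ∖ {0}} dim C_𝔭(ξ) and C_𝔭(ξ) is the centralizer of ξ in 𝔭. -/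
/-! Since every term `‖[v, wᵢ]‖²` is nonnegative, `Ric_k > 0` fails exactly when some orthonormal
frame `{v, w₁, …, w_k}` has all `wᵢ ∈ C_𝔭(v)`. As the bracket is alternating, `v ∈ C_𝔭(v)` too, so
such a frame forces `dim C_𝔭(v) > k`; conversely, if `dim C_𝔭(ξ) > k`, an orthonormal basis of
`C_𝔭(ξ)` extending `ξ / ‖ξ‖` yields such a frame. -/

open Module

theorem sum_norm_sq_pos_iff {ι E : Type*} [Fintype ι] [NormedAddCommGroup E] (f : ι → E) :
    0 < ∑ i, ‖f i‖ ^ 2 ↔ ∃ i, f i ≠ 0 := by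
  simp [Finset.sum_pos_iff_of_nonneg, sq_pos_iff]

theorem exists_orthonormal_fin_cons_mem {𝕜 E : Type*} [RCLike 𝕜] [NormedAddCommGroup E]
    [InnerProductSpace 𝕜 E] {K : Submodule 𝕜 E} [FiniteDimensional 𝕜 K] {x : E} (hxK : x ∈ K)
    (hx : ‖x‖ = 1) {k : ℕ} (hk : k < finrank 𝕜 K) :
    ∃ w : Fin k → E, Orthonormal 𝕜 (Fin.cons x w : Fin (k + 1) → E) ∧ ∀ i, w i ∈ K := by
  obtain ⟨b, hb⟩ := Orthonormal.exists_orthonormalBasis_extension_of_card_eq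
    (Fintype.card_fin _).symm (v := fun _ => (⟨x, hxK⟩ : K))
    (s := {(⟨0, by omega⟩ : Fin (finrank 𝕜 K))})
    (orthonormal_subsingleton_iff.mpr fun _ => by simpa using hx)
  let u : Fin (k + 1) → E := fun i => b (Fin.castLE hk i)
  have hu0 : u 0 = x := congrArg Subtype.val (hb _ rfl)
  refine ⟨Fin.tail u, ?_, fun i => (b _).2⟩
  rw [← hu0, Fin.cons_self_tail]
  exact (b.orthonormal.comp _ (Fin.castLE_injective hk)).comp_linearIsometry K.subtypeₗᵢ

namespace LinearMap.IsAlt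

variable {E F : Type*} [AddCommGroup F]

theorem lt_finrank_ker_flip_of_linearIndependent {K : Type*} [Field K] [AddCommGroup E]
    [Module K E] [FiniteDimensional K E] [Module K F] {b : E →ₗ[K] E →ₗ[K] F} (H : b.IsAlt)
    {k : ℕ} {v : E} {w : Fin k → E} (hvw : LinearIndependent K (Fin.cons v w : Fin (k + 1) → E))
    (hw : ∀ i, b v (w i) = 0) : k < finrank K (ker (b.flip v)) := by
  have hmem : ∀ i, (Fin.cons v w : Fin (k + 1) → E) i ∈ ker (b.flip v) :=
    Fin.cases (H.self_eq_zero v) fun i => H.eq_iff.mp (hw i)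
  calc k < Fintype.card (Fin (k + 1)) := by simp
    _ ≤ finrank K (Submodule.span K (Set.range (Fin.cons v w : Fin (k + 1) → E))) :=
      linearIndependent_iff_card_le_finrank_span.mp hvw
    _ ≤ finrank K (ker (b.flip v)) :=
      Submodule.finrank_mono (Submodule.span_le.mpr (Set.range_subset_iff.mpr hmem))

variable [NormedAddCommGroup E] [InnerProductSpace ℝ E] [FiniteDimensional ℝ E] [Module ℝ F]
  {b : E →ₗ[ℝ] E →ₗ[ℝ] F}

theorem exists_orthonormal_fin_cons_of_lt_finrank_ker_flip (H : b.IsAlt) {k : ℕ} {ξ : E}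
    (hξ : ξ ≠ 0) (hk : k < finrank ℝ (ker (b.flip ξ))) :
    ∃ (v : E) (w : Fin k → E), Orthonormal ℝ (Fin.cons v w) ∧ ∀ i, b v (w i) = 0 := by
  obtain ⟨w, hon, hw⟩ := exists_orthonormal_fin_cons_mem
    (Submodule.smul_mem _ ‖ξ‖⁻¹ (H.self_eq_zero ξ)) (norm_smul_inv_norm hξ) hk
  refine ⟨_, w, hon, fun i => ?_⟩
  rw [map_smul, LinearMap.smul_apply, H.eq_iff.mpr (hw i), smul_zero]

theorem exists_orthonormal_fin_cons_apply_eq_zero_iff (H : b.IsAlt) (k : ℕ) :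
    (∃ (v : E) (w : Fin k → E), Orthonormal ℝ (Fin.cons v w) ∧ ∀ i, b v (w i) = 0) ↔
      ∃ ξ : E, ξ ≠ 0 ∧ k < finrank ℝ (ker (b.flip ξ)) := by
  constructor
  · rintro ⟨v, w, hon, hw⟩
    exact ⟨v, hon.ne_zero 0, H.lt_finrank_ker_flip_of_linearIndependent hon.linearIndependent hw⟩
  · rintro ⟨ξ, hξ, hk⟩
    exact H.exists_orthonormal_fin_cons_of_lt_finrank_ker_flip hξ hk

end LinearMap.IsAlt

/-- Let `P` be a compact symmetric space, its tangent space at the base point identified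
with `𝔭` (a finite-dimensional real inner product space), with Lie bracket
`b = [·,·] : 𝔭 × 𝔭 → 𝔨` and sectional curvature `sec(v,w) = ‖[v,w]‖²` for orthonormal
`v, w`.  Let `k_P` be the maximum over `ξ ∈ 𝔭 ∖ {0}` of `dim C_𝔭(ξ)`, where
`C_𝔭(ξ) = {v : [v, ξ] = 0}`.  Then for every positive integer `k`, `P` has positive
`k`-th intermediate Ricci curvature (i.e. for every orthonormal `(k+1)`-frame
`{v, w₁, …, w_k}` one has `∑ᵢ ‖[v, wᵢ]‖² > 0`) if and only if `k ≥ k_P`. -/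
theorem stmt_8 {𝔭 𝔨 : Type*}
    [NormedAddCommGroup 𝔭] [InnerProductSpace ℝ 𝔭] [FiniteDimensional ℝ 𝔭]
    [NormedAddCommGroup 𝔨] [InnerProductSpace ℝ 𝔨]
    (b : 𝔭 →ₗ[ℝ] 𝔭 →ₗ[ℝ] 𝔨) (halt : ∀ v, b v v = 0)
    (kP : ℕ)
    (hkP : IsGreatest
      {d : ℕ | ∃ ξ : 𝔭, ξ ≠ 0 ∧ d = Module.finrank ℝ ↥(LinearMap.ker (b.flip ξ))} kP) :
    ∀ k : ℕ, 1 ≤ k →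
      ((∀ (v : 𝔭) (w : Fin k → 𝔭), Orthonormal ℝ (Fin.cons v w) →
          0 < ∑ i, ‖b v (w i)‖ ^ 2) ↔ kP ≤ k) := by
  intro k _
  calc (∀ (v : 𝔭) (w : Fin k → 𝔭), Orthonormal ℝ (Fin.cons v w) → 0 < ∑ i, ‖b v (w i)‖ ^ 2)
      ↔ ¬∃ (v : 𝔭) (w : Fin k → 𝔭), Orthonormal ℝ (Fin.cons v w) ∧ ∀ i, b v (w i) = 0 := by
        simp [sum_norm_sq_pos_iff]
    _ ↔ ¬∃ ξ : 𝔭, ξ ≠ 0 ∧ k < finrank ℝ (LinearMap.ker (b.flip ξ)) :=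
        not_congr (LinearMap.IsAlt.exists_orthonormal_fin_cons_apply_eq_zero_iff halt k)
    _ ↔ kP ≤ k := by
        rw [isLUB_le_iff hkP.isLUB, mem_upperBounds]
        simp [forall_comm (α := ℕ)]
end
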